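/- Let a ≥ 1 be a real number, let n ≥ 4a be an integer, and let f: {0,1}^n → ℝ be a nonnegative a-self-bounding function. Then ‖f‖_1 ≤ ‖f‖_∞ ≤ 3^a · ‖f‖_1. -/

import Mathlib

noncomputable section

/-- A function `f : {0,1}^n → ℝ` is `a`-self-bounding. -/
def SelfBounding (n : ℕ) (a : ℝ) (f : (Fin n → Bool) → ℝ) : Prop :=
  ∀ x : Fin n → Bool,
    (∀ i : Fin n,
      f x - min (f (Function.update x i false)) (f (Function.update x i true)) ≤ 1) ∧
    ∑ i : Fin n,
      (f x - min (f (Function.update x i false)) (f (Function.update x i true))) ≤ a * f x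

/-- Expectation with respect to the uniform distribution on `{0,1}^n`. -/
def expect (n : ℕ) (g : (Fin n → Bool) → ℝ) : ℝ :=
  (∑ x : Fin n → Bool, g x) / 2 ^ n

/-!
Fix a point `x` and let `μ_p` be the product measure on the cube under which each coordinate
agrees with `x` independently with probability `p`, so that `φ p = 𝔼_{μ_p} f` interpolates
between `expect n f` at `p = 1/2` and `f x` at `p = 1`. By the Russo–Margulis formula, `p φ'(p)`
is the sum over `i` of the `μ_p`-expected drop of `f` when coordinate `i` is moved away from `x`,
which the self-bounding property bounds by `a φ(p)`. Hence `φ p * p ^ (-a)` is antitone on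
`[1/2, 1]`, and `f x ≤ 2 ^ a * expect n f ≤ 3 ^ a * expect n f`.
-/

open Finset Function

theorem antitoneOn_mul_rpow_neg_of_mul_deriv_le {φ φ' : ℝ → ℝ} {a s t : ℝ} (hs : 0 < s)
    (hφ : ∀ x ∈ Set.Icc s t, HasDerivAt φ (φ' x) x)
    (hφ' : ∀ x ∈ Set.Ioo s t, x * φ' x ≤ a * φ x) :
    AntitoneOn (fun x => φ x * x ^ (-a)) (Set.Icc s t) := by
  have hpos : ∀ x ∈ Set.Icc s t, 0 < x := fun x hx => hs.trans_le hx.1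
  have hderiv : ∀ x ∈ Set.Icc s t, HasDerivAt (fun x => φ x * x ^ (-a))
      (φ' x * x ^ (-a) + φ x * (-a * x ^ (-a - 1))) x := fun x hx =>
    (hφ x hx).mul (Real.hasDerivAt_rpow_const (Or.inl (hpos x hx).ne'))
  refine antitoneOn_of_hasDerivWithinAt_nonpos (convex_Icc s t)
    (fun x hx => (hderiv x hx).continuousAt.continuousWithinAt)
    (fun x hx => (hderiv x (interior_subset hx)).hasDerivWithinAt) fun x hx => ?_
  rw [interior_Icc] at hx
  have hx0 := hpos x (Set.Ioo_subset_Icc_self hx)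
  have hrpow : x ^ (-a - 1) = x ^ (-a) / x := by rw [Real.rpow_sub hx0, Real.rpow_one]
  have key : x ^ (-a) * (x * φ' x - a * φ x) ≤ 0 :=
    mul_nonpos_of_nonneg_of_nonpos (Real.rpow_nonneg hx0.le _) (by linarith [hφ' x hx])
  rw [hrpow]
  field_simp
  linarith

namespace BoolCube

variable {n : ℕ}

def biasedWeight (x : Fin n → Bool) (p : ℝ) (z : Fin n → Bool) : ℝ :=
  ∏ i, if z i = x i then p else 1 - p

def biasedMean (x : Fin n → Bool) (p : ℝ) (f : (Fin n → Bool) → ℝ) : ℝ :=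
  ∑ z, f z * biasedWeight x p z

theorem biasedWeight_nonneg (x : Fin n → Bool) {p : ℝ} (hp₀ : 0 ≤ p) (hp₁ : p ≤ 1)
    (z : Fin n → Bool) : 0 ≤ biasedWeight x p z :=
  prod_nonneg fun i _ => by split_ifs <;> linarith

theorem biasedWeight_update (x z : Fin n → Bool) (p : ℝ) (i : Fin n) (b : Bool) :
    biasedWeight x p (update z i b) =
      (if b = x i then p else 1 - p) * ∏ j ∈ univ.erase i, if z j = x j then p else 1 - p := by
  rw [biasedWeight, ← mul_prod_erase univ _ (mem_univ i), update_self]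
  congr 1
  exact prod_congr rfl fun j hj => by rw [update_of_ne (ne_of_mem_erase hj)]

theorem hasDerivAt_biasedWeight (x z : Fin n → Bool) (p : ℝ) :
    HasDerivAt (fun q => biasedWeight x q z)
      (∑ i, (∏ j ∈ univ.erase i, if z j = x j then p else 1 - p) *
        if z i = x i then 1 else -1) p := by
  refine HasDerivAt.fun_finsetProd fun i _ => ?_
  split_ifs
  · exact hasDerivAt_id p
  · simpa using (hasDerivAt_id p).const_sub 1

theorem biasedMean_one (x : Fin n → Bool) (f : (Fin n → Bool) → ℝ) :
    biasedMean x 1 f = f x := by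
  simp [biasedMean, biasedWeight, Fintype.prod_boole, ← funext_iff]

theorem biasedMean_half (x : Fin n → Bool) (f : (Fin n → Bool) → ℝ) :
    biasedMean x (1 / 2) f = expect n f := by
  norm_num [biasedMean, biasedWeight, _root_.expect, sum_mul, div_eq_mul_inv]

theorem biasedMean_mono (x : Fin n → Bool) {p : ℝ} (hp₀ : 0 ≤ p) (hp₁ : p ≤ 1)
    {f g : (Fin n → Bool) → ℝ} (h : ∀ z, f z ≤ g z) :
    biasedMean x p f ≤ biasedMean x p g :=
  sum_le_sum fun z _ => mul_le_mul_of_nonneg_right (h z) (biasedWeight_nonneg x hp₀ hp₁ z)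

theorem biasedMean_sum (x : Fin n → Bool) (p : ℝ) (f : Fin n → (Fin n → Bool) → ℝ) :
    biasedMean x p (fun z => ∑ i, f i z) = ∑ i, biasedMean x p (f i) := by
  simp only [biasedMean, sum_mul]
  exact sum_comm

theorem biasedMean_const_mul (x : Fin n → Bool) (p a : ℝ) (f : (Fin n → Bool) → ℝ) :
    biasedMean x p (fun z => a * f z) = a * biasedMean x p f := by
  simp only [biasedMean, mul_sum, mul_assoc]

theorem sum_filter_ne_eq_sum_filter_eq_update {M : Type*} [AddCommMonoid M] (x : Fin n → Bool)
    (i : Fin n) (g : (Fin n → Bool) → M) :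
    ∑ z with z i ≠ x i, g z = ∑ u with u i = x i, g (update u i (!x i)) := by
  symm
  refine sum_nbij' (fun u => update u i (!x i)) (fun z => update z i (x i)) ?_ ?_ ?_ ?_ ?_
  · simp
  · simp
  · intro u hu
    rw [update_idem, ← (mem_filter.1 hu).2, update_eq_self]
  · intro z hz
    rw [update_idem, ← Bool.eq_not.2 (mem_filter.1 hz).2, update_eq_self]
  · simp

def awayDrop (x : Fin n → Bool) (f : (Fin n → Bool) → ℝ) (i : Fin n) (u : Fin n → Bool) :
    ℝ :=
  if u i = x i then f u - f (update u i (!x i)) else 0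

theorem hasDerivAt_biasedMean (x : Fin n → Bool) (f : (Fin n → Bool) → ℝ) {p : ℝ}
    (hp : p ≠ 0) :
    HasDerivAt (fun q => biasedMean x q f) ((∑ i, biasedMean x p (awayDrop x f i)) / p) p := by
  refine (HasDerivAt.fun_sum fun z _ =>
    (hasDerivAt_biasedWeight x z p).const_mul (f z)).congr_deriv ?_
  symm
  rw [div_eq_iff hp]
  have hweight : ∀ z i, (∏ j ∈ univ.erase i, if z j = x j then p else 1 - p) * p =
      biasedWeight x p (update z i (x i)) := fun z i => by
    rw [biasedWeight_update, if_pos rfl, mul_comm]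
  calc ∑ i, biasedMean x p (awayDrop x f i)
      = ∑ i, ∑ z, if z i = x i then f z * biasedWeight x p (update z i (x i))
          else -(f z * biasedWeight x p (update z i (x i))) := by
        refine sum_congr rfl fun i _ => ?_
        rw [sum_ite, sum_filter_ne_eq_sum_filter_eq_update x i, ← sum_add_distrib, biasedMean]
        simp only [awayDrop, ite_mul, zero_mul]
        rw [← sum_filter]
        refine sum_congr rfl fun u hu => ?_
        rw [update_idem, ← (mem_filter.1 hu).2, update_eq_self]
        ring
    _ = (∑ z, f z * ∑ i, (∏ j ∈ univ.erase i, if z j = x j then p else 1 - p) *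
          if z i = x i then 1 else -1) * p := by
        simp only [sum_mul, mul_sum]
        rw [sum_comm]
        refine sum_congr rfl fun z _ => sum_congr rfl fun i _ => ?_
        rw [mul_assoc, mul_right_comm, hweight]
        split_ifs <;> ring

def coordDrop (f : (Fin n → Bool) → ℝ) (x : Fin n → Bool) (i : Fin n) : ℝ :=
  f x - min (f (update x i false)) (f (update x i true))

theorem sub_le_coordDrop (f : (Fin n → Bool) → ℝ) (x : Fin n → Bool) (i : Fin n)
    (b : Bool) : f x - f (update x i b) ≤ coordDrop f x i := by
  have : min (f (update x i false)) (f (update x i true)) ≤ f (update x i b) := by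
    cases b
    exacts [min_le_left _ _, min_le_right _ _]
  rw [coordDrop]
  linarith

theorem coordDrop_nonneg (f : (Fin n → Bool) → ℝ) (x : Fin n → Bool) (i : Fin n) :
    0 ≤ coordDrop f x i := by
  simpa using sub_le_coordDrop f x i (x i)

theorem awayDrop_le_coordDrop (x : Fin n → Bool) (f : (Fin n → Bool) → ℝ) (i : Fin n)
    (u : Fin n → Bool) : awayDrop x f i u ≤ coordDrop f u i := by
  rw [awayDrop]
  split_ifs
  exacts [sub_le_coordDrop f u i _, coordDrop_nonneg f u i]

theorem sum_biasedMean_awayDrop_le {a p : ℝ} (hp₀ : 0 ≤ p) (hp₁ : p ≤ 1)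
    (x : Fin n → Bool) {f : (Fin n → Bool) → ℝ} (hf : ∀ z, ∑ i, coordDrop f z i ≤ a * f z) :
    ∑ i, biasedMean x p (awayDrop x f i) ≤ a * biasedMean x p f :=
  calc ∑ i, biasedMean x p (awayDrop x f i)
      ≤ ∑ i, biasedMean x p (fun u => coordDrop f u i) :=
        sum_le_sum fun i _ => biasedMean_mono x hp₀ hp₁ (awayDrop_le_coordDrop x f i)
    _ = biasedMean x p (fun u => ∑ i, coordDrop f u i) := (biasedMean_sum x p _).symm
    _ ≤ biasedMean x p (fun u => a * f u) := biasedMean_mono x hp₀ hp₁ hf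
    _ = a * biasedMean x p f := biasedMean_const_mul x p a f

theorem le_two_rpow_mul_expect {a : ℝ} {f : (Fin n → Bool) → ℝ}
    (hf : ∀ z, ∑ i, coordDrop f z i ≤ a * f z) (x : Fin n → Bool) :
    f x ≤ 2 ^ a * expect n f := by
  have hanti := antitoneOn_mul_rpow_neg_of_mul_deriv_le (φ := fun p => biasedMean x p f)
    (a := a) (s := 1 / 2) (t := 1) (by norm_num)
    (fun p hp => hasDerivAt_biasedMean x f (by linarith [hp.1]))
    (fun p hp => by
      rw [mul_div_cancel₀ _ (by linarith [hp.1])]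
      exact sum_biasedMean_awayDrop_le (by linarith [hp.1]) hp.2.le x hf)
  have h := hanti (Set.left_mem_Icc.2 (by norm_num)) (Set.right_mem_Icc.2 (by norm_num))
    (by norm_num)
  have hhalf : (1 / 2 : ℝ) ^ (-a) = 2 ^ a := by
    rw [Real.rpow_neg (by norm_num), one_div, Real.inv_rpow (by norm_num), inv_inv]
  simpa only [biasedMean_one, biasedMean_half, Real.one_rpow, mul_one, hhalf, mul_comm]
    using h

theorem expect_le_iSup (g : (Fin n → Bool) → ℝ) : expect n g ≤ ⨆ x, g x := by
  rw [_root_.expect, div_le_iff₀ (by positivity)]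
  calc ∑ x, g x ≤ ∑ _x : Fin n → Bool, ⨆ y, g y :=
        sum_le_sum fun x _ => le_ciSup (Set.finite_range g).bddAbove x
    _ = (⨆ y, g y) * 2 ^ n := by simp [mul_comm]

theorem expect_nonneg {g : (Fin n → Bool) → ℝ} (hg : ∀ x, 0 ≤ g x) : 0 ≤ expect n g :=
  div_nonneg (sum_nonneg fun x _ => hg x) (by positivity)

end BoolCube

theorem selfbounding_norm_comparison_general (n : ℕ) (a : ℝ) (ha : 1 ≤ a)
    (f : (Fin n → Bool) → ℝ) (hf0 : ∀ x, 0 ≤ f x) (hf : SelfBounding n a f) :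
    expect n (fun x => |f x|) ≤ (⨆ x : Fin n → Bool, |f x|) ∧
      (⨆ x : Fin n → Bool, |f x|) ≤ (3 : ℝ) ^ (a : ℝ) * expect n (fun x => |f x|) := by
  have habs : (fun x => |f x|) = f := funext fun x => abs_of_nonneg (hf0 x)
  rw [habs]
  refine ⟨BoolCube.expect_le_iSup f, ?_⟩
  calc ⨆ x, f x ≤ 2 ^ a * expect n f :=
        ciSup_le (BoolCube.le_two_rpow_mul_expect fun z => (hf z).2)
    _ ≤ 3 ^ a * expect n f := by
      gcongr
      · exact BoolCube.expect_nonneg hf0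
      · linarith

theorem selfbounding_norm_comparison (n : ℕ) (a : ℝ) (ha : 1 ≤ a) (hn : 4 * a ≤ (n : ℝ))
    (f : (Fin n → Bool) → ℝ) (hf0 : ∀ x, 0 ≤ f x) (hf : SelfBounding n a f) :
    expect n (fun x => |f x|) ≤ (⨆ x : Fin n → Bool, |f x|) ∧
      (⨆ x : Fin n → Bool, |f x|) ≤ (3 : ℝ) ^ (a : ℝ) * expect n (fun x => |f x|) :=
  selfbounding_norm_comparison_general n a ha f hf0 hf
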